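/- Let G be a strongly connected signed digraph and let L̂ = (W·L + Lᵀ·W)/2 be its mirror Laplacian, a real symmetric matrix with real eigenvalues λ_1(L̂) ≤ λ_2(L̂) ≤ … ≤ λ_n(L̂) listed in increasing order with multiplicity. Then G is structurally unbalanced if and only if 0 < λ_1(L̂); that is, if and only if L̂ is positive definite. -/

import Mathlib

open Matrix BigOperators Filter

/-- In-degree of node `i`: sum of absolute values of the `i`-th row of `A`. -/
noncomputable def inDeg {n : ℕ} (A : Matrix (Fin n) (Fin n) ℝ) (i : Fin n) : ℝ := ∑ j, |A i j|

/-- Laplacian `L = Δ − A` of the signed digraph with adjacency matrix `A`. -/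
noncomputable def lapOf {n : ℕ} (A : Matrix (Fin n) (Fin n) ℝ) : Matrix (Fin n) (Fin n) ℝ :=
  Matrix.diagonal (inDeg A) - A

/-- Laplacian `L̄ = Δ − Ā` of the induced unsigned digraph. -/
noncomputable def lapBar {n : ℕ} (A : Matrix (Fin n) (Fin n) ℝ) : Matrix (Fin n) (Fin n) ℝ :=
  Matrix.diagonal (inDeg A) - Matrix.of (fun i j => |A i j|)

/-- `det(L̄_ii)`: determinant of `L̄` with its `i`-th row and column removed. -/
noncomputable def minorDet {n : ℕ} (A : Matrix (Fin n) (Fin n) ℝ) (i : Fin n) : ℝ :=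
  Matrix.det ((lapBar A).submatrix (fun k : {j : Fin n // j ≠ i} => (k : Fin n))
    (fun k : {j : Fin n // j ≠ i} => (k : Fin n)))

/-- `W = diag(det(L̄_11), …, det(L̄_nn))`. -/
noncomputable def Wmat {n : ℕ} (A : Matrix (Fin n) (Fin n) ℝ) : Matrix (Fin n) (Fin n) ℝ :=
  Matrix.diagonal (minorDet A)

/-- Mirror adjacency matrix `Â = (W·A + Aᵀ·W)/2`. -/
noncomputable def mirrorAdj {n : ℕ} (A : Matrix (Fin n) (Fin n) ℝ) : Matrix (Fin n) (Fin n) ℝ :=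
  (1/2 : ℝ) • (Wmat A * A + Aᵀ * Wmat A)

/-- Mirror Laplacian `L̂ = (W·L + Lᵀ·W)/2`. -/
noncomputable def mirrorLap {n : ℕ} (A : Matrix (Fin n) (Fin n) ℝ) : Matrix (Fin n) (Fin n) ℝ :=
  (1/2 : ℝ) • (Wmat A * lapOf A + (lapOf A)ᵀ * Wmat A)

/-- `(j, i)` is a directed edge when `a_ij ≠ 0`; strong connectivity: a directed
path between every ordered pair of distinct nodes. -/
def StronglyConnected {n : ℕ} (A : Matrix (Fin n) (Fin n) ℝ) : Prop :=
  ∀ i j : Fin n, i ≠ j → Relation.TransGen (fun u v => A v u ≠ 0) i j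

/-- `σ` is the diagonal of a gauge transformation: each entry is `±1`. -/
def IsGauge {n : ℕ} (σ : Fin n → ℝ) : Prop := ∀ i, σ i = 1 ∨ σ i = -1

/-- Structural balance: there is a gauge transformation `D = diag σ` with all entries
of `D·A·D` (entrywise `σ i * A i j * σ j`) nonnegative. -/
def StructBalanced {n : ℕ} (A : Matrix (Fin n) (Fin n) ℝ) : Prop :=
  ∃ σ : Fin n → ℝ, IsGauge σ ∧ ∀ i j, 0 ≤ σ i * A i j * σ j

/-- Improved Laplacian potential function
`Φ_e(x) = Σ_i Σ_j det(L̄_ii)·|a_ij|·(x_i − sgn(a_ij)·x_j)²`. -/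
noncomputable def PhiE {n : ℕ} (A : Matrix (Fin n) (Fin n) ℝ) (x : Fin n → ℝ) : ℝ :=
  ∑ i, ∑ j, minorDet A i * |A i j| * (x i - Real.sign (A i j) * x j) ^ 2

/-!
The quadratic form of the mirror Laplacian is `xᵀ L̂ x = Φₑ(x) / 2`, where
`Φₑ(x) = Σᵢⱼ wᵢ |aᵢⱼ| (xᵢ - sgn(aᵢⱼ) xⱼ)²` and `wᵢ = det L̄ᵢᵢ`. Two facts about the strongly
connected unsigned graph make this work: `w` is a left null vector of `L̄`, and every `wᵢ > 0`
(by a maximum principle `L̄ᵢᵢ + t I` is nonsingular for all `t ≥ 0`, while its determinant is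
a monic polynomial in `t`). So `L̂` is positive semidefinite, and `xᵀ L̂ x = 0` exactly when
`xᵢ = sgn(aᵢⱼ) xⱼ` along every edge. A gauge of a balanced graph is such an `x`; conversely, by
strong connectivity a nonzero such `x` has constant `|xᵢ|`, and `x / |x|` is a gauge balancing `G`.
-/

theorem det_pos_of_det_add_smul_one_ne_zero {m : Type*} [Fintype m] [DecidableEq m]
    (M : Matrix m m ℝ) (h : ∀ t : ℝ, 0 ≤ t → (M + t • 1).det ≠ 0) : 0 < M.det := by
  rcases isEmpty_or_nonempty m with hm | hm
  · simp
  set p := (-M).charpoly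
  have hp : ∀ t, p.eval t = (M + t • 1).det := fun t => by
    rw [Matrix.eval_charpoly, sub_neg_eq_add, add_comm, Matrix.smul_one_eq_diagonal]
    rfl
  have hdeg : 0 < p.degree := by
    rw [Matrix.charpoly_degree_eq_dim]; exact_mod_cast Fintype.card_pos
  have hlim := Polynomial.tendsto_atTop_of_leadingCoeff_nonneg p hdeg
    (by rw [(Matrix.charpoly_monic _).leadingCoeff]; exact zero_le_one)
  obtain ⟨T, hpT, hT⟩ := ((hlim.eventually_gt_atTop 0).and (eventually_ge_atTop 0)).exists
  by_contra! hM
  have h0 : (0 : ℝ) ∈ Set.Icc (p.eval 0) (p.eval T) := ⟨by simpa [hp] using hM, hpT.le⟩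
  obtain ⟨c, hc, hpc⟩ := intermediate_value_Icc hT p.continuous.continuousOn h0
  exact h c hc.1 (by rw [← hp]; exact hpc)

theorem submatrix_val_mulVec_apply {ι R : Type*} [Fintype ι] [Semiring R] {p : ι → Prop}
    [DecidablePred p] (N : Matrix ι ι R) (v : {x // p x} → R) (k : {x // p x}) :
    (N.submatrix Subtype.val Subtype.val *ᵥ v) k =
      (N *ᵥ fun x => if h : p x then v ⟨x, h⟩ else 0) k := by
  set f : ι → R := fun x => N k x * if h : p x then v ⟨x, h⟩ else 0
  have hsplit := Fintype.sum_subtype_add_sum_subtype p f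
  rw [Fintype.sum_eq_zero (fun x : {x // ¬ p x} => f x) (fun x => by simp [f, x.2]),
    add_zero] at hsplit
  simp only [Matrix.mulVec, dotProduct, Matrix.submatrix_apply]
  rw [← hsplit]
  exact Fintype.sum_congr _ _ fun x => by simp [f, x.2]

theorem adjugate_apply_self_eq_det_submatrix {R : Type*} [CommRing R] {n : ℕ}
    (M : Matrix (Fin n) (Fin n) R) (i : Fin n) :
    M.adjugate i i = (M.submatrix (Subtype.val : {j // j ≠ i} → Fin n) Subtype.val).det := by
  obtain ⟨m, rfl⟩ : ∃ m, n = m + 1 := Nat.exists_eq_succ_of_ne_zero i.pos.ne'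
  rw [Matrix.adjugate_fin_succ_eq_det_submatrix,
    ← Matrix.det_submatrix_equiv_self (finSuccAboveEquiv i)]
  simp [← two_mul, pow_mul]
  rfl

section
variable {n : ℕ} {A : Matrix (Fin n) (Fin n) ℝ}

theorem lapBar_mulVec_apply (u : Fin n → ℝ) (k : Fin n) :
    (lapBar A *ᵥ u) k = inDeg A k * u k - ∑ l, |A k l| * u l := by
  rw [lapBar, Matrix.sub_mulVec, Pi.sub_apply, Matrix.mulVec_diagonal]
  rfl

theorem StronglyConnected.mem_of_closed (hsc : StronglyConnected A) {S : Set (Fin n)}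
    (hS : ∀ k l, k ∈ S → A k l ≠ 0 → l ∈ S) {k : Fin n} (hk : k ∈ S) (j : Fin n) : j ∈ S := by
  have hback : ∀ {a b}, Relation.TransGen (fun u v => A v u ≠ 0) a b → b ∈ S → a ∈ S := by
    intro a b hab
    induction hab with
    | single h => exact fun hb => hS _ _ hb h
    | tail _ h ih => exact fun hc => ih (hS _ _ hc h)
  rcases eq_or_ne j k with rfl | hjk
  · exact hk
  · exact hback (hsc j k hjk) hk

/-- Discrete maximum principle. -/
theorem StronglyConnected.eq_max_of_le_sum (hsc : StronglyConnected A) {u : Fin n → ℝ}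
    {k₀ : Fin n} (hmax : ∀ l, u l ≤ u k₀)
    (hsub : ∀ k, u k = u k₀ → inDeg A k * u k ≤ ∑ l, |A k l| * u l) (j : Fin n) :
    u j = u k₀ := by
  refine hsc.mem_of_closed (S := {k | u k = u k₀}) (fun k l hk hkl => ?_) rfl j
  have hterm : ∀ l ∈ Finset.univ, 0 ≤ |A k l| * (u k - u l) := fun l _ =>
    mul_nonneg (abs_nonneg _) (by linarith [hmax l, hk.symm])
  have hsum : ∑ l, |A k l| * (u k - u l) = 0 := by
    refine le_antisymm ?_ (Finset.sum_nonneg hterm)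
    have := hsub k hk
    simp only [mul_sub, Finset.sum_sub_distrib, ← Finset.sum_mul]
    rw [← inDeg]
    linarith
  have hl := (Finset.sum_eq_zero_iff_of_nonneg hterm).mp hsum l (Finset.mem_univ l)
  rw [mul_eq_zero, abs_eq_zero, sub_eq_zero] at hl
  exact (hl.resolve_left hkl).symm.trans hk

theorem StronglyConnected.eq_of_lapBar_mulVec_eq_zero (hsc : StronglyConnected A)
    {u : Fin n → ℝ} (hu : lapBar A *ᵥ u = 0) (j k : Fin n) : u j = u k := by
  obtain ⟨k₀, -, hk₀⟩ := Finset.exists_max_image Finset.univ u ⟨k, Finset.mem_univ _⟩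
  have hconst := hsc.eq_max_of_le_sum (fun l => hk₀ l (Finset.mem_univ l)) fun k _ => by
    have hk := congrFun hu k
    rw [lapBar_mulVec_apply, Pi.zero_apply, sub_eq_zero] at hk
    exact hk.le
  rw [hconst j, hconst k]

theorem det_lapBar_eq_zero [NeZero n] : (lapBar A).det = 0 := by
  refine Matrix.exists_mulVec_eq_zero_iff.mp ⟨fun _ => 1, fun h => ?_, ?_⟩
  · simpa using congrFun h 0
  · ext k
    simp [lapBar_mulVec_apply, inDeg]

theorem StronglyConnected.adjugate_lapBar_apply (hsc : StronglyConnected A) (k j : Fin n) :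
    (lapBar A).adjugate k j = minorDet A j := by
  have : NeZero n := ⟨j.pos.ne'⟩
  have hcol : lapBar A *ᵥ (fun m => (lapBar A).adjugate m j) = 0 := by
    ext m
    simpa [det_lapBar_eq_zero, Matrix.mul_apply, Matrix.mulVec, dotProduct] using
      congrFun (congrFun (Matrix.mul_adjugate (lapBar A)) m) j
  rw [hsc.eq_of_lapBar_mulVec_eq_zero hcol k j, adjugate_apply_self_eq_det_submatrix]
  rfl

/-- That is, `(det L̄₁₁, …, det L̄ₙₙ)` is a left null vector of `L̄`: the columns of `adj L̄`
lie in `ker L̄`, which consists of the constant vectors. -/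
theorem StronglyConnected.sum_minorDet_mul_abs (hsc : StronglyConnected A) (j : Fin n) :
    ∑ k, minorDet A k * |A k j| = minorDet A j * inDeg A j := by
  have : NeZero n := ⟨j.pos.ne'⟩
  have h := congrFun (congrFun (Matrix.adjugate_mul (lapBar A)) j) j
  rw [det_lapBar_eq_zero, zero_smul, Matrix.zero_apply, Matrix.mul_apply] at h
  simp only [hsc.adjugate_lapBar_apply] at h
  simp only [lapBar, Matrix.sub_apply, Matrix.diagonal_apply,
    Matrix.of_apply, mul_sub, Finset.sum_sub_distrib, mul_ite, mul_zero,
    Finset.sum_ite_eq', Finset.mem_univ, if_true] at h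
  linarith

theorem StronglyConnected.nonpos_of_shifted_harmonic (hsc : StronglyConnected A) {i : Fin n}
    {t : ℝ} (ht : 0 ≤ t) {u : Fin n → ℝ} (hi : u i = 0)
    (hu : ∀ k, k ≠ i → (inDeg A k + t) * u k = ∑ l, |A k l| * u l) (j : Fin n) : u j ≤ 0 := by
  obtain ⟨k₀, -, hk₀⟩ := Finset.exists_max_image Finset.univ u ⟨i, Finset.mem_univ _⟩
  by_contra! hj
  have hpos : 0 < u k₀ := hj.trans_le (hk₀ j (Finset.mem_univ _))
  have hsub : ∀ k, u k = u k₀ → inDeg A k * u k ≤ ∑ l, |A k l| * u l := fun k hk => by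
    have hki : k ≠ i := by rintro rfl; linarith
    nlinarith [hu k hki]
  linarith [hsc.eq_max_of_le_sum (fun l => hk₀ l (Finset.mem_univ l)) hsub i]

theorem StronglyConnected.minorDet_pos (hsc : StronglyConnected A) (i : Fin n) :
    0 < minorDet A i := by
  refine det_pos_of_det_add_smul_one_ne_zero _ fun t ht hdet => ?_
  obtain ⟨v, hv0, hv⟩ := Matrix.exists_mulVec_eq_zero_iff.mpr hdet
  set u : Fin n → ℝ := fun x => if h : x ≠ i then v ⟨x, h⟩ else 0
  have hu : ∀ k, k ≠ i → (inDeg A k + t) * u k = ∑ l, |A k l| * u l := fun k hk => by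
    have h := congrFun hv ⟨k, hk⟩
    rw [Matrix.add_mulVec, Matrix.smul_mulVec, Matrix.one_mulVec, Pi.add_apply,
      submatrix_val_mulVec_apply] at h
    change (lapBar A *ᵥ u) k + t * v ⟨k, hk⟩ = 0 at h
    rw [lapBar_mulVec_apply, show v ⟨k, hk⟩ = u k by simp [u, hk]] at h
    linarith
  have hui : u i = 0 := by simp [u]
  refine hv0 (funext fun k => le_antisymm ?_ ?_)
  · simpa [u, k.2] using hsc.nonpos_of_shifted_harmonic ht hui hu k
  · have hneg := hsc.nonpos_of_shifted_harmonic (i := i) (u := -u) ht (by simp [hui])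
      (fun k hk => by simp [Finset.sum_neg_distrib, hu k hk]) k
    simpa [u, k.2] using hneg

theorem lapOf_mulVec_apply (x : Fin n → ℝ) (i : Fin n) :
    (lapOf A *ᵥ x) i = ∑ j, (|A i j| * x i - A i j * x j) := by
  rw [lapOf, Matrix.sub_mulVec, Pi.sub_apply, Matrix.mulVec_diagonal, inDeg, Finset.sum_mul,
    Finset.sum_sub_distrib]
  rfl

theorem StronglyConnected.phiE_eq (hsc : StronglyConnected A) (x : Fin n → ℝ) :
    PhiE A x = 2 * (x ⬝ᵥ (Wmat A * lapOf A) *ᵥ x) := by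
  have hterm : ∀ i j, minorDet A i * |A i j| * (x i - Real.sign (A i j) * x j) ^ 2 =
      2 * (x i * (minorDet A i * (|A i j| * x i - A i j * x j))) +
        minorDet A i * |A i j| * (x j ^ 2 - x i ^ 2) := fun i j => by
    have hs : Real.sign (A i j) * |A i j| = A i j := by
      rcases lt_trichotomy (A i j) 0 with h | h | h
      · simp [Real.sign_of_neg h, abs_of_neg h]
      · simp [h]
      · simp [Real.sign_of_pos h, abs_of_pos h]
    have hs2 : Real.sign (A i j) ^ 2 * |A i j| = |A i j| := by
      rcases eq_or_ne (A i j) 0 with h | h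
      · simp [h]
      · rcases Real.sign_apply_eq_of_ne_zero _ h with hs | hs <;> simp [hs]
    linear_combination (-2 * minorDet A i * x i * x j) * hs + (minorDet A i * x j ^ 2) * hs2
  have hcancel : ∑ i, ∑ j, minorDet A i * |A i j| * (x j ^ 2 - x i ^ 2) = 0 := by
    simp only [mul_sub, Finset.sum_sub_distrib, sub_eq_zero]
    conv_lhs => rw [Finset.sum_comm]
    refine Finset.sum_congr rfl fun j _ => ?_
    rw [← Finset.sum_mul, hsc.sum_minorDet_mul_abs, inDeg, Finset.mul_sum, Finset.sum_mul]
  simp only [PhiE, hterm, Finset.sum_add_distrib, hcancel, add_zero, ← Finset.mul_sum,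
    ← Matrix.mulVec_mulVec, Wmat, Matrix.mulVec_diagonal, lapOf_mulVec_apply, dotProduct]

theorem dotProduct_mirrorLap_mulVec (x : Fin n → ℝ) :
    x ⬝ᵥ (mirrorLap A *ᵥ x) = x ⬝ᵥ ((Wmat A * lapOf A) *ᵥ x) := by
  have hW : (Wmat A)ᵀ = Wmat A := Matrix.diagonal_transpose _
  rw [mirrorLap, ← hW, ← Matrix.transpose_mul, hW, Matrix.smul_mulVec, Matrix.add_mulVec,
    dotProduct_smul, dotProduct_add, Matrix.mulVec_transpose, dotProduct_comm x (x ᵥ* _),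
    ← Matrix.dotProduct_mulVec]
  simp only [smul_eq_mul]
  ring

theorem isHermitian_mirrorLap : (mirrorLap A).IsHermitian := by
  have hW : (Wmat A)ᵀ = Wmat A := Matrix.diagonal_transpose _
  rw [Matrix.IsHermitian, Matrix.conjTranspose_eq_transpose_of_trivial, mirrorLap,
    Matrix.transpose_smul, Matrix.transpose_add, Matrix.transpose_mul, Matrix.transpose_mul,
    Matrix.transpose_transpose, hW, add_comm]

def IsSignConsistent (A : Matrix (Fin n) (Fin n) ℝ) (x : Fin n → ℝ) : Prop :=
  ∀ i j, A i j ≠ 0 → x i = Real.sign (A i j) * x j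

theorem phiE_nonneg (hw : ∀ i, 0 ≤ minorDet A i) (x : Fin n → ℝ) : 0 ≤ PhiE A x :=
  Finset.sum_nonneg fun i _ => Finset.sum_nonneg fun j _ => by have := hw i; positivity

theorem phiE_eq_zero_iff (hw : ∀ i, 0 < minorDet A i) {x : Fin n → ℝ} :
    PhiE A x = 0 ↔ IsSignConsistent A x := by
  have hterm : ∀ i j, 0 ≤ minorDet A i * |A i j| * (x i - Real.sign (A i j) * x j) ^ 2 :=
    fun i j => by have := hw i; positivity
  rw [PhiE, Finset.sum_eq_zero_iff_of_nonneg fun i _ => Finset.sum_nonneg fun j _ => hterm i j]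
  simp only [Finset.sum_eq_zero_iff_of_nonneg fun j _ => hterm _ j, Finset.mem_univ,
    forall_const, mul_eq_zero, (hw _).ne', false_or, abs_eq_zero, pow_eq_zero_iff two_ne_zero,
    sub_eq_zero]
  simp only [or_iff_not_imp_left, IsSignConsistent]

theorem StronglyConnected.posDef_mirrorLap_iff (hsc : StronglyConnected A) :
    (mirrorLap A).PosDef ↔ ∀ x, x ≠ 0 → ¬ IsSignConsistent A x := by
  rw [Matrix.posDef_iff_dotProduct_mulVec, and_iff_right isHermitian_mirrorLap]
  refine forall_congr' fun x => imp_congr_right fun _ => ?_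
  rw [← phiE_eq_zero_iff hsc.minorDet_pos, ← ne_eq,
    ← (phiE_nonneg (fun i => (hsc.minorDet_pos i).le) x).lt_iff_ne', hsc.phiE_eq, star_trivial,
    dotProduct_mirrorLap_mulVec, mul_pos_iff_of_pos_left two_pos]

theorem isSignConsistent_of_gauge {σ : Fin n → ℝ} (hσ : IsGauge σ)
    (hb : ∀ i j, 0 ≤ σ i * A i j * σ j) : IsSignConsistent A σ := by
  intro i j hA
  have hb := hb i j
  rcases hσ i with hi | hi <;> rcases hσ j with hj | hj <;>
    rcases hA.lt_or_gt with ha | ha <;>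
    simp only [hi, hj, Real.sign_of_neg, Real.sign_of_pos, ha] at hb ⊢ <;> linarith

theorem StronglyConnected.structBalanced_of_isSignConsistent (hsc : StronglyConnected A)
    {x : Fin n → ℝ} (hx : x ≠ 0) (hc : IsSignConsistent A x) : StructBalanced A := by
  obtain ⟨k, hk⟩ := Function.ne_iff.mp hx
  have habs : ∀ j, |x j| = |x k| := hsc.mem_of_closed (S := {j | |x j| = |x k|})
    (fun i j hi hij => by
      rcases Real.sign_apply_eq_of_ne_zero _ hij with hs | hs <;>
        simpa [hc i j hij, hs] using hi) rfl
  have hxk : 0 < |x k| := abs_pos.mpr hk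
  refine ⟨fun j => x j / |x k|, fun j => ?_, fun i j => ?_⟩
  · rcases (abs_eq hxk.le).mp (habs j) with h | h
    · exact .inl (by dsimp only; rw [h, div_self hxk.ne'])
    · exact .inr (by dsimp only; rw [h, neg_div, div_self hxk.ne'])
  · have hij : x i * A i j * x j = Real.sign (A i j) * A i j * x j ^ 2 := by
      rcases eq_or_ne (A i j) 0 with h | h
      · simp [h]
      · rw [hc i j h]; ring
    calc (0 : ℝ) ≤ x i * A i j * x j / |x k| ^ 2 := by
          rw [hij]; have := Real.sign_mul_nonneg (A i j); positivity
      _ = x i / |x k| * A i j * (x j / |x k|) := by ring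

theorem StronglyConnected.structBalanced_iff [NeZero n] (hsc : StronglyConnected A) :
    StructBalanced A ↔ ∃ x, x ≠ 0 ∧ IsSignConsistent A x := by
  refine ⟨fun ⟨σ, hσ, hb⟩ => ⟨σ, fun h => ?_, isSignConsistent_of_gauge hσ hb⟩,
    fun ⟨x, hx, hc⟩ => hsc.structBalanced_of_isSignConsistent hx hc⟩
  rcases hσ 0 with h0 | h0 <;> simp [h] at h0

end

theorem unbalanced_iff_posdef_general (n : ℕ) (hn : 2 ≤ n)
    (A : Matrix (Fin n) (Fin n) ℝ)
    (hsc : StronglyConnected A) :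
    ¬ StructBalanced A ↔ (mirrorLap A).PosDef := by
  have : NeZero n := ⟨by omega⟩
  rw [hsc.structBalanced_iff, hsc.posDef_mirrorLap_iff]
  simp only [not_exists, not_and]

/-- `G` is structurally unbalanced iff `L̂` is positive definite. -/
theorem unbalanced_iff_posdef (n : ℕ) (hn : 2 ≤ n)
    (A : Matrix (Fin n) (Fin n) ℝ)
    (hdiag : ∀ i, A i i = 0) (hdigon : ∀ i j, 0 ≤ A i j * A j i)
    (hsc : StronglyConnected A) :
    ¬ StructBalanced A ↔ (mirrorLap A).PosDef :=
  unbalanced_iff_posdef_general n hn A hsc
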